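/- arXiv:1903.06825 — 3 statements merged into one kernel-verified Lean document; each statement's English description precedes it below -/
import Mathlib

section
/- Let G be a finite abelian group and let n be a natural number such that every multiset of elements of G of cardinality greater than n contains a nonempty submultiset whose product is the identity (for example, n = n(G)). Let r and t be integers with r > t > n. Then for every function a : {1,…,r} → G, the number of subsets S ⊆ {1,…,r} with t − n ≤ |S| ≤ t and ∏_{i∈S} a(i) = 1 is at least (r choose t)/(r choose n). -/
/-!
Call `S ⊆ {1, …, r}` good if `t - n ≤ |S| ≤ t` and `∏_{i ∈ S} a i = 1`. Repeatedly extracting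
nonempty identity-product subsets from a set `T` until at most `n` indices remain shows that every
`T` contains an identity-product subset missing at most `n` of its elements; so every `t`-set
contains a good set. Conversely, a good `S` lies in at most `(r choose n)` sets of size `t`: fixing
`S' ⊆ S` with `|S'| = t - n`, the map `T ↦ T \ S'` sends them injectively to `n`-sets. Double
counting the pairs (good set, `t`-superset) gives `(r choose t) ≤ #good * (r choose n)`.
-/

open Finset

theorem Multiset.exists_le_map_eq_of_le_map {α β : Type*} {f : α → β} {s : Multiset α}
    {M : Multiset β} (h : M ≤ s.map f) : ∃ u ≤ s, u.map f = M := by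
  induction s using Quotient.inductionOn
  induction M using Quotient.inductionOn
  obtain ⟨l, hperm, hsub⟩ := Multiset.coe_le.1 h
  obtain ⟨l', hl', rfl⟩ := List.sublist_map_iff.1 hsub
  exact ⟨l', Multiset.coe_le.2 hl'.subperm, Multiset.coe_eq_coe.2 hperm⟩

theorem exists_nonempty_subset_prod_eq_one {G ι : Type*} [CommMonoid G] {n : ℕ}
    (hn : ∀ S : Multiset G, n < Multiset.card S → ∃ T ≤ S, T ≠ 0 ∧ T.prod = 1) (a : ι → G)
    {T : Finset ι} (hT : n < #T) :
    ∃ S ⊆ T, S.Nonempty ∧ ∏ i ∈ S, a i = 1 := by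
  obtain ⟨M, hM, hM0, hMprod⟩ := hn (T.val.map a) (by simpa using hT)
  obtain ⟨u, hu, rfl⟩ := Multiset.exists_le_map_eq_of_le_map hM
  refine ⟨⟨u, Multiset.nodup_of_le hu T.nodup⟩, fun i hi => Multiset.mem_of_le hu hi, ?_, hMprod⟩
  refine nonempty_iff_ne_empty.2 fun h => hM0 ?_
  rw [show u = 0 from congrArg Finset.val h, Multiset.map_zero]

theorem exists_subset_prod_eq_one_card_le_add {G ι : Type*} [CommMonoid G] [DecidableEq ι]
    {n : ℕ} (hn : ∀ S : Multiset G, n < Multiset.card S → ∃ T ≤ S, T ≠ 0 ∧ T.prod = 1)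
    (a : ι → G) (T : Finset ι) :
    ∃ S ⊆ T, ∏ i ∈ S, a i = 1 ∧ #T ≤ #S + n := by
  induction T using Finset.strongInduction with
  | H T ih =>
    by_cases hT : #T ≤ n
    · exact ⟨∅, empty_subset _, prod_empty, by simpa using hT⟩
    obtain ⟨S₀, hS₀T, hS₀, hprod₀⟩ := exists_nonempty_subset_prod_eq_one hn a (not_le.1 hT)
    obtain ⟨S₁, hS₁, hprod₁, hcard₁⟩ := ih (T \ S₀) (sdiff_ssubset hS₀T hS₀)
    have hdisj : Disjoint S₀ S₁ := disjoint_of_subset_right hS₁ disjoint_sdiff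
    refine ⟨S₀ ∪ S₁, union_subset hS₀T (hS₁.trans sdiff_subset), ?_, ?_⟩
    · rw [prod_union hdisj, hprod₀, hprod₁, one_mul]
    · rw [card_union_of_disjoint hdisj]
      have := card_sdiff_of_subset hS₀T
      have := card_le_card hS₀T
      omega

theorem Finset.card_filter_superset_powersetCard_le {ι : Type*} [Fintype ι] [DecidableEq ι]
    {S : Finset ι} {n t : ℕ} (hnt : n ≤ t) (hS : t ≤ #S + n) :
    #{T ∈ powersetCard t univ | S ⊆ T} ≤ (Fintype.card ι).choose n := by
  obtain ⟨S', hS'S, hS'⟩ := exists_subset_card_eq (s := S) (n := t - n) (by omega)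
  rw [← card_univ, ← card_powersetCard]
  refine card_le_card_of_injOn (· \ S') (fun T hT => ?_) (fun T₁ hT₁ T₂ hT₂ h => ?_)
  · obtain ⟨hT, hST⟩ := mem_filter.1 (mem_coe.1 hT)
    have hTt := (mem_powersetCard.1 hT).2
    refine mem_coe.2 (mem_powersetCard.2 ⟨subset_univ _, ?_⟩)
    rw [card_sdiff_of_subset (hS'S.trans hST), hTt, hS']
    omega
  · have hS'T₁ := hS'S.trans (mem_filter.1 (mem_coe.1 hT₁)).2
    have hS'T₂ := hS'S.trans (mem_filter.1 (mem_coe.1 hT₂)).2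
    rw [← sdiff_union_of_subset hS'T₁, ← sdiff_union_of_subset hS'T₂]
    exact congrArg (· ∪ S') h

theorem Finset.choose_le_card_mul_choose_of_forall_exists_subset {ι : Type*} [Fintype ι]
    [DecidableEq ι] {𝒢 : Finset (Finset ι)} {n t : ℕ} (hnt : n ≤ t)
    (h𝒢 : ∀ S ∈ 𝒢, t ≤ #S + n) (hcover : ∀ T : Finset ι, #T = t → ∃ S ∈ 𝒢, S ⊆ T) :
    (Fintype.card ι).choose t ≤ #𝒢 * (Fintype.card ι).choose n := by
  have := card_mul_le_card_mul (fun T S => S ⊆ T) (s := powersetCard t univ) (t := 𝒢) (m := 1)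
    (fun T hT => ?_) (fun S hS => card_filter_superset_powersetCard_le hnt (h𝒢 S hS))
  · simpa using this
  · obtain ⟨S, hS, hST⟩ := hcover T (mem_powersetCard.1 hT).2
    exact one_le_card.2 ⟨S, mem_bipartiteAbove _ |>.2 ⟨hS, hST⟩⟩

open Finset in
theorem many_subsequences_with_identity_product_general (G : Type*) [CommGroup G]
    [DecidableEq G] (n : ℕ)
    (hn : ∀ S : Multiset G, n < Multiset.card S →
      ∃ T : Multiset G, T ≤ S ∧ T ≠ 0 ∧ T.prod = 1)
    (r t : ℕ) (hnt : n < t) (a : Fin r → G) :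
    ((r.choose t : ℝ) / (r.choose n : ℝ)) ≤
      ((Finset.univ.filter fun S : Finset (Fin r) =>
        t - n ≤ S.card ∧ S.card ≤ t ∧ ∏ i ∈ S, a i = 1).card : ℝ) := by
  have hcount := choose_le_card_mul_choose_of_forall_exists_subset (ι := Fin r)
    (𝒢 := {S : Finset (Fin r) | t - n ≤ #S ∧ #S ≤ t ∧ ∏ i ∈ S, a i = 1}) hnt.le
    (fun S hS => by have := (mem_filter.1 hS).2.1; omega) fun T hT => by
      obtain ⟨S, hST, hprod, hcard⟩ := exists_subset_prod_eq_one_card_le_add hn a T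
      have := card_le_card hST
      exact ⟨S, mem_filter.2 ⟨mem_univ _, by omega, by omega, hprod⟩, hST⟩
  rw [Fintype.card_fin] at hcount
  exact div_le_of_le_mul₀ (Nat.cast_nonneg _) (Nat.cast_nonneg _) (by exact_mod_cast hcount)

open Finset in
/-- If every multiset of more than `n` elements of the finite abelian group `G` has a
nonempty submultiset with product the identity, and `r > t > n`, then any sequence of `r`
elements of `G` contains at least `(r choose t) / (r choose n)` distinct subsequences, of
length between `t - n` and `t`, whose product is the identity. -/
theorem many_subsequences_with_identity_product (G : Type*) [CommGroup G] [Fintype G]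
    [DecidableEq G] (n : ℕ)
    (hn : ∀ S : Multiset G, n < Multiset.card S →
      ∃ T : Multiset G, T ≤ S ∧ T ≠ 0 ∧ T.prod = 1)
    (r t : ℕ) (htr : t < r) (hnt : n < t) (a : Fin r → G) :
    ((r.choose t : ℝ) / (r.choose n : ℝ)) ≤
      ((Finset.univ.filter fun S : Finset (Fin r) =>
        t - n ≤ S.card ∧ S.card ≤ t ∧ ∏ i ∈ S, a i = 1).card : ℝ) :=
  many_subsequences_with_identity_product_general G n hn r t hnt a
end

section
/- Let k and L be positive integers and let S be a finite set of primes with |S| ≥ 2 such that every p ∈ S satisfies p = d·k + 1 for some divisor d of L. If N = ∏_{p ∈ S} p satisfies N ≡ 1 (mod k·L), then N is a Carmichael number. -/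
/-- A Carmichael number: a composite natural number `n > 1` such that
`a ^ (n - 1) ≡ 1 (mod n)` for every integer `a` coprime to `n`. -/
def IsCarmichael (n : ℕ) : Prop :=
  1 < n ∧ ¬ n.Prime ∧ ∀ a : ℤ, IsCoprime a (n : ℤ) → a ^ (n - 1) ≡ 1 [ZMOD (n : ℤ)]

/-!
Every prime `p ∈ S` has `p - 1 = d k` with `d ∣ L`, so `p - 1 ∣ k L ∣ N - 1`. By Fermat's little
theorem `a ^ (N - 1) ≡ 1` modulo each `p ∈ S` for `a` coprime to `N`, and since the primes of `S`
are distinct, the congruence holds modulo their product `N` (Korselt's criterion).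
-/

open Finset Function

theorem Int.pow_modEq_one_of_sub_one_dvd {p m : ℕ} (hp : p.Prime) {a : ℤ} (ha : IsCoprime a p)
    (hm : p - 1 ∣ m) : a ^ m ≡ 1 [ZMOD p] := by
  obtain ⟨c, rfl⟩ := hm
  simpa only [pow_mul, one_pow] using (Int.ModEq.pow_card_sub_one_eq_one hp ha).pow c

theorem Int.pow_modEq_one_of_forall_prime_sub_one_dvd {S : Finset ℕ} (hprime : ∀ p ∈ S, p.Prime)
    {a : ℤ} (ha : IsCoprime a (∏ p ∈ S, p : ℕ)) {m : ℕ} (hm : ∀ p ∈ S, p - 1 ∣ m) :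
    a ^ m ≡ 1 [ZMOD (∏ p ∈ S, p : ℕ)] := by
  have hcop : (S : Set ℕ).Pairwise (IsCoprime on fun p : ℕ ↦ (p : ℤ)) :=
    fun p hp q hq hpq ↦ Nat.isCoprime_iff_coprime.mpr
      ((Nat.coprime_primes (hprime p hp) (hprime q hq)).mpr hpq)
  have hdvd : ∀ p ∈ S, (p : ℤ) ∣ a ^ m - 1 := fun p hp ↦
    (Int.pow_modEq_one_of_sub_one_dvd (hprime p hp)
      (ha.of_isCoprime_of_dvd_right (Int.natCast_dvd_natCast.mpr (dvd_prod_of_mem _ hp)))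
      (hm p hp)).symm.dvd
  rw [Int.modEq_comm, Int.modEq_iff_dvd, Nat.cast_prod]
  exact prod_dvd_of_coprime hcop hdvd

theorem Nat.one_lt_prod_of_forall_prime {S : Finset ℕ} (hS : S.Nonempty)
    (hprime : ∀ p ∈ S, p.Prime) : 1 < ∏ p ∈ S, p := by
  obtain ⟨p, hp⟩ := hS
  exact (hprime p hp).one_lt.trans_le
    (Nat.le_of_dvd (prod_pos fun q hq ↦ (hprime q hq).pos) (dvd_prod_of_mem _ hp))

theorem Nat.not_prime_prod_of_one_lt_card {S : Finset ℕ} (hS : 1 < S.card)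
    (hprime : ∀ p ∈ S, p.Prime) : ¬ (∏ p ∈ S, p).Prime := by
  obtain ⟨p, hp, q, hq, hpq⟩ := one_lt_card.mp hS
  intro hN
  have hpN := (Nat.prime_dvd_prime_iff_eq (hprime p hp) hN).mp (dvd_prod_of_mem _ hp)
  have hqN := (Nat.prime_dvd_prime_iff_eq (hprime q hq) hN).mp (dvd_prod_of_mem _ hq)
  exact hpq (hpN.trans hqN.symm)

theorem isCarmichael_prod_of_forall_prime_sub_one_dvd {S : Finset ℕ} (hS : 1 < S.card)
    (hprime : ∀ p ∈ S, p.Prime) (hdvd : ∀ p ∈ S, p - 1 ∣ (∏ q ∈ S, q) - 1) :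
    IsCarmichael (∏ p ∈ S, p) :=
  ⟨Nat.one_lt_prod_of_forall_prime (card_pos.mp (by omega)) hprime,
    Nat.not_prime_prod_of_one_lt_card hS hprime,
    fun _ ha ↦ Int.pow_modEq_one_of_forall_prime_sub_one_dvd hprime ha hdvd⟩

theorem product_is_carmichael_general (k L : ℕ)
    (S : Finset ℕ) (hcard : 2 ≤ S.card) (hprime : ∀ p ∈ S, p.Prime)
    (hform : ∀ p ∈ S, ∃ d : ℕ, d ∣ L ∧ p = d * k + 1)
    (N : ℕ) (hN : N = ∏ p ∈ S, p) (hmod : N ≡ 1 [MOD k * L]) :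
    IsCarmichael N := by
  subst hN
  have hkL : k * L ∣ (∏ p ∈ S, p) - 1 :=
    (Nat.modEq_iff_dvd' (Nat.one_lt_prod_of_forall_prime
      (card_pos.mp (by omega)) hprime).le).mp hmod.symm
  refine isCarmichael_prod_of_forall_prime_sub_one_dvd hcard hprime fun p hp ↦ ?_
  obtain ⟨d, hdL, rfl⟩ := hform p hp
  rw [Nat.add_sub_cancel]
  exact ((mul_dvd_mul_right hdL k).trans (dvd_of_eq (mul_comm L k))).trans hkL

/-- If `S` is a set of at least two primes, each of the form `d k + 1` with `d ∣ L`, and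
the product `N` of the primes in `S` satisfies `N ≡ 1 (mod k L)`, then `N` is a
Carmichael number. -/
theorem product_is_carmichael (k L : ℕ) (hk : 0 < k) (hL : 0 < L)
    (S : Finset ℕ) (hcard : 2 ≤ S.card) (hprime : ∀ p ∈ S, p.Prime)
    (hform : ∀ p ∈ S, ∃ d : ℕ, d ∣ L ∧ p = d * k + 1)
    (N : ℕ) (hN : N = ∏ p ∈ S, p) (hmod : N ≡ 1 [MOD k * L]) :
    IsCarmichael N :=
  product_is_carmichael_general k L S hcard hprime hform N hN hmod
end

section
/- Let y ≥ 2 be a real number and let L be a squarefree positive integer such that every prime q dividing L satisfies q ≤ y³ and q − 1 has no prime factor exceeding y. Then the exponent λ(L) of the multiplicative group of units (ℤ/Lℤ)* satisfies λ(L) ≤ y^{3·π(y)}. -/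
/-!
For squarefree `L`, `λ(L)` is the least common multiple of the numbers `q - 1`, `q ∣ L` prime.
Each `q - 1` is at most `y³` and `y`-smooth, so every prime power exactly dividing it is a power
`p ^ a ≤ y³` of a prime `p ≤ y`. Hence all the `q - 1` divide `∏_{p ≤ y} p ^ ⌊log_p y³⌋`, a product
of `π(y)` factors, each at most `y³`.
-/

/-- `primePi y` is the number of primes `p ≤ y`. -/
noncomputable def primePi (y : ℝ) : ℕ := {p : ℕ | p.Prime ∧ (p : ℝ) ≤ y}.ncard

lemma mem_primesBelow_floor_add_one_iff {y : ℝ} {p : ℕ} :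
    p ∈ Nat.primesBelow (⌊y⌋₊ + 1) ↔ p.Prime ∧ (p : ℝ) ≤ y := by
  rw [Nat.mem_primesBelow, Nat.lt_succ_iff, and_comm]
  exact and_congr_right fun hp => Nat.le_floor_iff' hp.ne_zero

lemma primePi_eq_card_primesBelow (y : ℝ) :
    primePi y = (Nat.primesBelow (⌊y⌋₊ + 1)).card := by
  rw [primePi, ← Set.ncard_coe_finset]
  congr 1
  ext p
  exact mem_primesBelow_floor_add_one_iff.symm

lemma Nat.dvd_prod_pow_log_of_primeFactors_subset {n N : ℕ} {P : Finset ℕ} (hn : n ≠ 0)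
    (hnN : n ≤ N) (hP : n.primeFactors ⊆ P) : n ∣ ∏ p ∈ P, p ^ Nat.log p N := by
  have hN : N ≠ 0 := by omega
  rw [Nat.prod_primeFactors_pow_factorization hn]
  refine (Finset.prod_dvd_prod_of_dvd _ _ fun p hp => pow_dvd_pow p ?_).trans
    (Finset.prod_dvd_prod_of_subset _ _ _ hP)
  rw [Nat.le_log_iff_pow_le (Nat.prime_of_mem_primeFactors hp).one_lt hN]
  exact (Nat.le_of_dvd (by omega) (Nat.ordProj_dvd n p)).trans hnN

lemma Nat.cast_pow_log_floor_le {x : ℝ} (hx : 1 ≤ x) (b : ℕ) :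
    ((b ^ Nat.log b ⌊x⌋₊ : ℕ) : ℝ) ≤ x :=
  (Nat.cast_le.2 (Nat.pow_log_le_self b (Nat.floor_pos.2 hx).ne')).trans
    (Nat.floor_le (by linarith))

lemma ZMod.eq_zero_of_squarefree_of_forall_castHom {L : ℕ} (hL : Squarefree L) (z : ZMod L)
    (hz : ∀ q, q.Prime → (hq : q ∣ L) → ZMod.castHom hq (ZMod q) z = 0) : z = 0 := by
  have : NeZero L := ⟨hL.ne_zero⟩
  rw [← ZMod.natCast_zmod_val z, ZMod.natCast_eq_zero_iff]
  conv_lhs => rw [← Nat.prod_primeFactors_of_squarefree hL]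
  refine Finset.prod_primes_dvd _ (fun q hq => (Nat.prime_of_mem_primeFactors hq).prime)
    fun q hq => ?_
  have hqL := Nat.dvd_of_mem_primeFactors hq
  rw [← ZMod.natCast_eq_zero_iff, ← map_natCast (ZMod.castHom hqL (ZMod q)),
    ZMod.natCast_zmod_val]
  exact hz q (Nat.prime_of_mem_primeFactors hq) hqL

lemma ZMod.exponent_units_dvd_of_squarefree {L K : ℕ} (hL : Squarefree L)
    (hK : ∀ q, q.Prime → q ∣ L → q - 1 ∣ K) : Monoid.exponent (ZMod L)ˣ ∣ K := by
  refine Monoid.exponent_dvd_of_forall_pow_eq_one fun a => Units.ext ?_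
  rw [Units.val_pow_eq_pow_val, Units.val_one, ← sub_eq_zero]
  refine ZMod.eq_zero_of_squarefree_of_forall_castHom hL _ fun q hq hqL => ?_
  have : Fact q.Prime := ⟨hq⟩
  obtain ⟨c, hc⟩ := hK q hq hqL
  have ha : ZMod.castHom hqL (ZMod q) a ≠ 0 := ((Units.isUnit a).map _).ne_zero
  rw [map_sub, map_pow, map_one, hc, pow_mul, ZMod.pow_card_sub_one_eq_one ha, one_pow, sub_self]

theorem carmichael_lambda_bound_general (y : ℝ) (L : ℕ)
    (hsq : Squarefree L)
    (hsize : ∀ q : ℕ, q.Prime → q ∣ L → (q : ℝ) ≤ y ^ 3)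
    (hsmooth : ∀ q : ℕ, q.Prime → q ∣ L →
      ∀ p : ℕ, p.Prime → p ∣ (q - 1) → (p : ℝ) ≤ y) :
    (Monoid.exponent (ZMod L)ˣ : ℝ) ≤ y ^ (3 * primePi y) := by
  set P := Nat.primesBelow (⌊y⌋₊ + 1)
  have hdvd : Monoid.exponent (ZMod L)ˣ ∣ ∏ p ∈ P, p ^ Nat.log p ⌊y ^ 3⌋₊ := by
    refine ZMod.exponent_units_dvd_of_squarefree hsq fun q hq hqL => ?_
    refine Nat.dvd_prod_pow_log_of_primeFactors_subset (by have := hq.two_le; omega)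
      (Nat.le_floor ((Nat.cast_le.2 (Nat.sub_le q 1)).trans (hsize q hq hqL))) fun p hp => ?_
    have hpp := Nat.prime_of_mem_primeFactors hp
    exact mem_primesBelow_floor_add_one_iff.2
      ⟨hpp, hsmooth q hq hqL p hpp (Nat.dvd_of_mem_primeFactors hp)⟩
  have hpos : 0 < ∏ p ∈ P, p ^ Nat.log p ⌊y ^ 3⌋₊ :=
    Finset.prod_pos fun p hp => pow_pos (mem_primesBelow_floor_add_one_iff.1 hp).1.pos _
  calc (Monoid.exponent (ZMod L)ˣ : ℝ)
      ≤ ((∏ p ∈ P, p ^ Nat.log p ⌊y ^ 3⌋₊ : ℕ) : ℝ) := Nat.cast_le.2 (Nat.le_of_dvd hpos hdvd)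
    _ ≤ ∏ _p ∈ P, y ^ 3 := by
      rw [Nat.cast_prod]
      refine Finset.prod_le_prod (fun _ _ => by positivity) fun p hp => ?_
      obtain ⟨hp, hpy⟩ := mem_primesBelow_floor_add_one_iff.1 hp
      have hy : (1 : ℝ) ≤ y := (Nat.one_le_cast.2 hp.one_le).trans hpy
      exact Nat.cast_pow_log_floor_le (one_le_pow₀ hy) p
    _ = y ^ (3 * primePi y) := by rw [Finset.prod_const, ← pow_mul, primePi_eq_card_primesBelow]

/-- If `y ≥ 2` and `L` is a squarefree positive integer all of whose prime factors `q`
satisfy `q ≤ y ^ 3` and `q - 1` is free of prime factors exceeding `y`, then the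
exponent `λ(L)` of `(ℤ/Lℤ)*` is at most `y ^ (3 π(y))`. -/
theorem carmichael_lambda_bound (y : ℝ) (hy : 2 ≤ y) (L : ℕ) (hL : 0 < L)
    (hsq : Squarefree L)
    (hsize : ∀ q : ℕ, q.Prime → q ∣ L → (q : ℝ) ≤ y ^ 3)
    (hsmooth : ∀ q : ℕ, q.Prime → q ∣ L →
      ∀ p : ℕ, p.Prime → p ∣ (q - 1) → (p : ℝ) ≤ y) :
    (Monoid.exponent (ZMod L)ˣ : ℝ) ≤ y ^ (3 * primePi y) :=
  carmichael_lambda_bound_general y L hsq hsize hsmooth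
end
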